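/- Let T > 0, let λ : [0,T] → [0,∞) be continuous with λ > 0 on (0,T], and Λ(t) := ∫₀ᵗ λ(s) ds. Fix N > 0, a real r ≥ e, and t₁, t₂ ∈ (0,T] with t₁ ≤ t₂ and Λ(t₁)·r = N·ln r. Then ∫_{t₁}^{t₂} (ln r)²·r^{−1}·λ(τ)/Λ(τ)² dτ ≤ (ln r)/N. -/

import Mathlib

/-- `Λ(t) = ∫₀ᵗ λ(s) ds`. -/
noncomputable def Lam (lam : ℝ → ℝ) (t : ℝ) : ℝ := ∫ s in (0:ℝ)..t, lam s

/-!
Since `Λ' = λ`, the integrand `λ / Λ²` is the derivative of `-Λ⁻¹`, so the integral over `[t₁, t₂]`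
equals `Λ(t₁)⁻¹ - Λ(t₂)⁻¹ ≤ Λ(t₁)⁻¹ = r / (N ln r)`; here `Λ` stays positive on `[t₁, t₂]` because it is
nondecreasing and `Λ(t₁) > 0` by the zone-boundary relation.
-/

open Set intervalIntegral MeasureTheory

theorem integral_deriv_div_sq_eq_inv_sub_inv {f f' : ℝ → ℝ} {a b : ℝ} (hab : a ≤ b)
    (hf : ContinuousOn f (Icc a b)) (hf' : ContinuousOn f' (Icc a b))
    (hderiv : ∀ x ∈ Ioo a b, HasDerivAt f (f' x) x) (hne : ∀ x ∈ Icc a b, f x ≠ 0) :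
    ∫ x in a..b, f' x / f x ^ 2 = (f a)⁻¹ - (f b)⁻¹ := by
  have hint : IntervalIntegrable (fun x => f' x / f x ^ 2) volume a b :=
    (hf'.div (hf.pow 2) fun x hx => pow_ne_zero 2 (hne x hx)).intervalIntegrable_of_Icc hab
  have hinv : ∀ x ∈ Ioo a b, HasDerivAt (-f⁻¹) (f' x / f x ^ 2) x := fun x hx => by
    have := ((hderiv x hx).inv (hne x (Ioo_subset_Icc_self hx))).neg
    rwa [neg_div, neg_neg] at this
  rw [integral_eq_sub_of_hasDerivAt_of_le hab (hf.inv₀ hne).neg hinv hint]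
  simp only [Pi.neg_apply, Pi.inv_apply, neg_sub_neg]

section Lam

variable {lam : ℝ → ℝ} {T : ℝ}

theorem continuousOn_Lam (hcont : ContinuousOn lam (Icc 0 T)) :
    ContinuousOn (Lam lam) (Icc 0 T) := by
  rcases le_or_gt 0 T with hT | hT
  · rw [← uIcc_of_le hT] at hcont ⊢
    exact continuousOn_primitive_interval (hcont.integrableOn_compact isCompact_uIcc)
  · simp [Icc_eq_empty_of_lt hT]

theorem hasDerivAt_Lam (hcont : ContinuousOn lam (Icc 0 T)) {t : ℝ} (ht : t ∈ Ioo 0 T) :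
    HasDerivAt (Lam lam) (lam t) t := by
  have hIoo : ContinuousOn lam (Ioo 0 T) := hcont.mono Ioo_subset_Icc_self
  exact integral_hasDerivAt_right
    ((hcont.mono (Icc_subset_Icc_right ht.2.le)).intervalIntegrable_of_Icc ht.1.le)
    (hIoo.stronglyMeasurableAtFilter isOpen_Ioo t ht) (hIoo.continuousAt (isOpen_Ioo.mem_nhds ht))

theorem monotoneOn_Lam (hcont : ContinuousOn lam (Icc 0 T))
    (hnn : ∀ t ∈ Icc 0 T, 0 ≤ lam t) : MonotoneOn (Lam lam) (Icc 0 T) := by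
  refine monotoneOn_of_hasDerivWithinAt_nonneg (f' := lam) (convex_Icc 0 T)
    (continuousOn_Lam hcont) (fun t ht => ?_) fun t ht => hnn t (interior_subset ht)
  rw [interior_Icc] at ht ⊢
  exact (hasDerivAt_Lam hcont ht).hasDerivWithinAt

end Lam

theorem osc_zone_integral_bound_general
    (T : ℝ) (lam : ℝ → ℝ)
    (hcont : ContinuousOn lam (Set.Icc 0 T))
    (hnn : ∀ t ∈ Set.Icc 0 T, 0 ≤ lam t)
    (N r t₁ t₂ : ℝ) (hN : 0 < N) (hr : Real.exp 1 ≤ r)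
    (ht₁ : t₁ ∈ Set.Ioc 0 T) (ht₂ : t₂ ∈ Set.Ioc 0 T) (h12 : t₁ ≤ t₂)
    (heq : Lam lam t₁ * r = N * Real.log r) :
    (∫ τ in t₁..t₂, Real.log r ^ 2 * r⁻¹ * (lam τ / Lam lam τ ^ 2))
      ≤ Real.log r / N := by
  have hr1 : 1 < r := (Real.one_lt_exp_iff.2 one_pos).trans_le hr
  have hlog : 0 < Real.log r := Real.log_pos hr1
  have hΛ₁ : 0 < Lam lam t₁ :=
    pos_of_mul_pos_left (heq ▸ mul_pos hN hlog) (zero_le_one.trans hr1.le)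
  have hsub : Icc t₁ t₂ ⊆ Icc 0 T := Icc_subset_Icc ht₁.1.le ht₂.2
  have hΛpos : ∀ t ∈ Icc t₁ t₂, 0 < Lam lam t := fun t ht =>
    hΛ₁.trans_le (monotoneOn_Lam hcont hnn (hsub (left_mem_Icc.2 h12)) (hsub ht) ht.1)
  have hintegral : ∫ τ in t₁..t₂, lam τ / Lam lam τ ^ 2 = (Lam lam t₁)⁻¹ - (Lam lam t₂)⁻¹ :=
    integral_deriv_div_sq_eq_inv_sub_inv h12 ((continuousOn_Lam hcont).mono hsub)
      (hcont.mono hsub)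
      (fun t ht => hasDerivAt_Lam hcont ⟨ht₁.1.trans ht.1, ht.2.trans_le ht₂.2⟩)
      fun t ht => (hΛpos t ht).ne'
  calc (∫ τ in t₁..t₂, Real.log r ^ 2 * r⁻¹ * (lam τ / Lam lam τ ^ 2))
      = Real.log r ^ 2 * r⁻¹ * ((Lam lam t₁)⁻¹ - (Lam lam t₂)⁻¹) := by
        rw [intervalIntegral.integral_const_mul, hintegral]
    _ ≤ Real.log r ^ 2 * r⁻¹ * (Lam lam t₁)⁻¹ := by
        gcongr
        exact sub_le_self _ (inv_pos.2 (hΛpos t₂ (right_mem_Icc.2 h12))).le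
    _ = Real.log r / N := by
        field_simp
        linarith

/-- The oscillation-subzone integral bound used before Proposition 5.11 of the paper:
`∫_{t₁}^{t₂} (ln r)²·r⁻¹·λ(τ)/Λ(τ)² dτ ≤ (ln r)/N`, where `t₁` is the zone-boundary
time (`Λ(t₁)·r = N·ln r`) and `r` abstracts `⟨x⟩⟨ξ⟩`. -/
theorem osc_zone_integral_bound
    (T : ℝ) (hT : 0 < T) (lam : ℝ → ℝ)
    (hcont : ContinuousOn lam (Set.Icc 0 T))
    (hnn : ∀ t ∈ Set.Icc 0 T, 0 ≤ lam t)
    (hpos : ∀ t ∈ Set.Ioc 0 T, 0 < lam t)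
    (N r t₁ t₂ : ℝ) (hN : 0 < N) (hr : Real.exp 1 ≤ r)
    (ht₁ : t₁ ∈ Set.Ioc 0 T) (ht₂ : t₂ ∈ Set.Ioc 0 T) (h12 : t₁ ≤ t₂)
    (heq : Lam lam t₁ * r = N * Real.log r) :
    (∫ τ in t₁..t₂, Real.log r ^ 2 * r⁻¹ * (lam τ / Lam lam τ ^ 2))
      ≤ Real.log r / N :=
  osc_zone_integral_bound_general T lam hcont hnn N r t₁ t₂ hN hr ht₁ ht₂ h12 heq
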